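/- Let k be a smooth unit vector field on an open subset of a Riemannian 3-manifold. The flow of k is geodesic (∇_k k = 0), divergence-free (div k = 0), and shear-free (⟨∇_x k, x⟩ = ⟨∇_y k, y⟩ and ⟨∇_y k, x⟩ + ⟨∇_x k, y⟩ = 0 for any local orthonormal frame {k,x,y}) if and only if k is a Killing vector field. -/
import Mathlib


/-- Axiom package: the complexified Levi-Civita connection `nab`, metric `g`,
Lie bracket `lie`, directional derivative `d` and conjugation `cj` on the
module `V` of (complexified) smooth vector fields on (an open subset of) a
Riemannian 3-manifold, over the commutative ring `F` of complex-valued smooth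
functions. -/
structure LeviCivita (F : Type*) [CommRing F] [Algebra ℂ F] [StarRing F]
    (V : Type*) [AddCommGroup V] [Module F V]
    (g : V → V → F) (nab : V → V → V) (lie : V → V → V)
    (d : V → F → F) (cj : V → V) : Prop where
  g_symm : ∀ u v : V, g u v = g v u
  g_addl : ∀ u v w : V, g (u + v) w = g u w + g v w
  g_smull : ∀ (f : F) (u v : V), g (f • u) v = f * g u v
  nab_addl : ∀ u v w : V, nab (u + v) w = nab u w + nab v w
  nab_smull : ∀ (f : F) (u v : V), nab (f • u) v = f • nab u v
  nab_addr : ∀ u v w : V, nab u (v + w) = nab u v + nab u w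
  nab_leibniz : ∀ (u : V) (f : F) (v : V), nab u (f • v) = d u f • v + f • nab u v
  d_addl : ∀ (u v : V) (f : F), d (u + v) f = d u f + d v f
  d_smull : ∀ (h : F) (u : V) (f : F), d (h • u) f = h * d u f
  d_add : ∀ (u : V) (f h : F), d u (f + h) = d u f + d u h
  d_mul : ∀ (u : V) (f h : F), d u (f * h) = d u f * h + f * d u h
  d_const : ∀ (u : V) (z : ℂ), d u (algebraMap ℂ F z) = 0
  d_lie : ∀ (u v : V) (f : F), d (lie u v) f = d u (d v f) - d v (d u f)
  compat : ∀ u v w : V, d u (g v w) = g (nab u v) w + g v (nab u w)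
  torsion_free : ∀ u v : V, nab u v - nab v u = lie u v
  lie_jacobi : ∀ u v w : V, lie u (lie v w) + lie v (lie w u) + lie w (lie u v) = 0
  cj_add : ∀ u v : V, cj (u + v) = cj u + cj v
  cj_smul : ∀ (f : F) (v : V), cj (f • v) = star f • cj v
  cj_g : ∀ u v : V, g (cj u) (cj v) = star (g u v)
  cj_nab : ∀ u v : V, nab (cj u) (cj v) = cj (nab u v)
  cj_d : ∀ (u : V) (f : F), d (cj u) (star f) = star (d u f)
  star_alg : ∀ z : ℂ, star (algebraMap ℂ F z) = algebraMap ℂ F (star z)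

/-- A (real) local orthonormal frame `{k, x, y}` on a Riemannian 3-manifold. -/
structure IsONFrame (F : Type*) [CommRing F] [Algebra ℂ F] [StarRing F]
    (V : Type*) [AddCommGroup V] [Module F V]
    (g : V → V → F) (cj : V → V) (k x y : V) : Prop where
  hkk : g k k = 1
  hxx : g x x = 1
  hyy : g y y = 1
  hkx : g k x = 0
  hky : g k y = 0
  hxy : g x y = 0
  cjk : cj k = k
  cjx : cj x = x
  cjy : cj y = y

/-- the flow of a unit vector field `k` is geodesic,
divergence-free and shear-free iff `k` is a Killing vector field. -/
theorem stmt_3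
    (F : Type*) [CommRing F] [Algebra ℂ F] [StarRing F]
    (V : Type*) [AddCommGroup V] [Module F V]
    (g : V → V → F) (nab lie : V → V → V) (d : V → F → F) (cj : V → V)
    (hLC : LeviCivita F V g nab lie d cj)
    (k x y : V) (hF : IsONFrame F V g cj k x y)
    (hspan : ∀ v : V, ∃ a b c : F, v = a • k + b • x + c • y) :
    (nab k k = 0 ∧ g (nab x k) x + g (nab y k) y = 0 ∧
      g (nab x k) x = g (nab y k) y ∧ g (nab y k) x + g (nab x k) y = 0) ↔
    (∀ v w : V, g (nab v k) w + g v (nab w k) = 0) := by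

  obtain ⟨g_symm, g_addl, g_smull, nab_addl, nab_smull, nab_addr, nab_leibniz,
    d_addl, d_smull, d_add, d_mul, d_const, d_lie, compat, torsion_free, lie_jacobi,
    cj_add, cj_smul, cj_g, cj_nab, cj_d, star_alg⟩ := hLC
  obtain ⟨hkk, hxx, hyy, hkx, hky, hxy, cjk, cjx, cjy⟩ := hF
  have g0l : ∀ v : V, g 0 v = 0 := fun v => by
    have h := g_smull 0 k v; simpa using h
  have g0r : ∀ v : V, g v 0 = 0 := fun v => by rw [g_symm]; exact g0l v
  have g_addr : ∀ u v w : V, g u (v + w) = g u v + g u w := fun u v w => by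
    rw [g_symm, g_addl, g_symm v u, g_symm w u]
  have g_smulr : ∀ (f : F) (u v : V), g u (f • v) = f * g u v := fun f u v => by
    rw [g_symm, g_smull, g_symm]
  have half : ∀ a : F, a + a = 0 → a = 0 := by
    intro a h
    have h2 : (2:ℂ) • a = 0 := by rw [two_smul]; exact h
    have h3 : ((2:ℂ)⁻¹ • ((2:ℂ) • a)) = a := by
      rw [smul_smul]; norm_num
    rw [← h3, h2, smul_zero]
  have done1 : ∀ v : V, d v (1:F) = 0 := fun v => by
    have h := d_const v 1; simpa using h
  have L : ∀ v : V, g (nab v k) k = 0 := by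
    intro v
    have h := compat v k k
    rw [hkk, done1 v, g_symm k (nab v k)] at h
    exact half _ h.symm
  have gxk : g x k = 0 := by rw [g_symm]; exact hkx
  have gyk : g y k = 0 := by rw [g_symm]; exact hky
  have gyx : g y x = 0 := by rw [g_symm]; exact hxy
  constructor
  · rintro ⟨h1, h2, h3, h4⟩
    have hxx0 : g (nab x k) x = 0 := half _ (by linear_combination h2 + h3)
    have hyy0 : g (nab y k) y = 0 := half _ (by linear_combination h2 - h3)
    have e1 : g (nab x k) k = 0 := L x
    have e2 : g (nab y k) k = 0 := L y
    have e1' : g k (nab x k) = 0 := by rw [g_symm]; exact e1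
    have e2' : g k (nab y k) = 0 := by rw [g_symm]; exact e2
    have exx' : g x (nab x k) = 0 := by rw [g_symm]; exact hxx0
    have eyy' : g y (nab y k) = 0 := by rw [g_symm]; exact hyy0
    have s1 : g x (nab y k) = g (nab y k) x := g_symm _ _
    have s2 : g y (nab x k) = g (nab x k) y := g_symm _ _
    intro v w
    obtain ⟨a, b, c, hv⟩ := hspan v
    obtain ⟨a', b', c', hw⟩ := hspan w
    subst hv; subst hw
    simp only [nab_addl, nab_smull, g_addl, g_smull, g_addr, g_smulr, h1,
      smul_zero, g0l, g0r, e1, e2, e1', e2', hxx0, hyy0, exx', eyy', s1, s2,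
      mul_zero, add_zero, zero_add, zero_mul, mul_zero]
    linear_combination (b * c' + c * b') * h4
  · intro hK
    have hxx0 : g (nab x k) x = 0 := by
      have h := hK x x
      rw [g_symm x (nab x k)] at h
      exact half _ h
    have hyy0 : g (nab y k) y = 0 := by
      have h := hK y y
      rw [g_symm y (nab y k)] at h
      exact half _ h
    refine ⟨?_, by rw [hxx0, hyy0, add_zero], by rw [hxx0, hyy0], ?_⟩
    · have ck : g (nab k k) k = 0 := L k
      have cx : g (nab k k) x = 0 := by
        have h := hK k x
        rw [g_symm k (nab x k), L x, add_zero] at h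
        exact h
      have cy : g (nab k k) y = 0 := by
        have h := hK k y
        rw [g_symm k (nab y k), L y, add_zero] at h
        exact h
      obtain ⟨a, b, c, h⟩ := hspan (nab k k)
      have ha : a = 0 := by
        have := ck
        rw [h] at this
        simp only [g_addl, g_smull, hkk, gxk, gyk, mul_one, mul_zero, add_zero] at this
        exact this
      have hb : b = 0 := by
        have := cx
        rw [h] at this
        simp only [g_addl, g_smull, hkx, hxx, gyx, mul_one, mul_zero, add_zero, zero_add] at this
        exact this
      have hc : c = 0 := by
        have := cy
        rw [h] at this
        simp only [g_addl, g_smull, hky, hxy, hyy, mul_one, mul_zero, add_zero, zero_add] at this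
        exact this
      rw [h, ha, hb, hc]
      simp
    · have h := hK x y
      rw [g_symm x (nab y k)] at h
      linear_combination h
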